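/- Let κ be an infinite cardinal, M a first-order structure with vocabulary τ(M), and w a finite nonempty subset of the universe of M. If rk¹(w, M; <κ) ≥ (|τ(M)| + ℵ₀)⁺ (the cardinal successor of |τ(M)| + ℵ₀), then rk¹(w, M; <κ) = ∞. -/

import Mathlib

open FirstOrder Cardinal

universe u

namespace Sh522

/-- `a ∈ clLt L M κ B` iff `a` is in the `<κ`-closure of `B` in `M`:
for some quantifier-free formula `φ(y, x₁, …, xₙ)` and parameters `b` from `B`,
`M ⊨ φ[a, b]` and the set of solutions of `φ(−, b)` has cardinality `< κ`. -/
def clLt (L : FirstOrder.Language.{u, u}) (M : Type u) [L.Structure M]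
    (κ : Cardinal.{u}) (B : Set M) : Set M :=
  {a | ∃ (n : ℕ) (φ : L.Formula (Fin (n + 1))),
      FirstOrder.Language.BoundedFormula.IsQF φ ∧
      ∃ b : Fin n → M, (∀ i, b i ∈ B) ∧
        φ.Realize (Fin.cons a b) ∧
        Cardinal.mk {x : M // φ.Realize (Fin.cons x b)} < κ}

/-- `rk^l(w, M; <κ) ≥ 0`. -/
def rkBase (L : FirstOrder.Language.{u, u}) (M : Type u) [L.Structure M]
    (κ : Cardinal.{u}) (w : Set M) : Prop :=
  w.Finite ∧ w.Nonempty ∧ ∀ a ∈ w, a ∉ clLt L M κ (w \ {a})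

/-- The successor step of the rank: `rk^l(w, M; <κ) ≥ β + 1` where `P` is
`rk^l(−, M; <κ) ≥ β`. -/
def rkStep (L : FirstOrder.Language.{u, u}) (M : Type u) [L.Structure M]
    (l : ℕ) (κ : Cardinal.{u}) (P : Set M → Prop) (w : Set M) : Prop :=
  w.Finite ∧ w.Nonempty ∧
  ∀ (n : ℕ) (a : Fin n → M), Function.Injective a → Set.range a = w →
    ∀ (k : Fin n) (φ : L.Formula (Fin n)),
      FirstOrder.Language.BoundedFormula.IsQF φ → φ.Realize a →
      ∃ b : Fin 2 → Fin n → M,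
        P (Set.range fun p : Fin 2 × Fin n => b p.1 p.2) ∧
        (∀ i : Fin 2, φ.Realize (b i)) ∧
        b 0 k ≠ b 1 k ∧
        (∀ m : Fin n, m ≠ k → b 0 m = b 1 m) ∧
        (l = 0 → ∀ m : Fin n, b 0 m = a m)

/-- `rkGe L M l κ α w` says `rk^l(w, M; <κ) ≥ α`. -/
noncomputable def rkGe (L : FirstOrder.Language.{u, u}) (M : Type u) [L.Structure M]
    (l : ℕ) (κ : Cardinal.{u}) (α : Ordinal.{u}) : Set M → Prop :=
  Ordinal.limitRecOn (motive := fun _ => Set M → Prop) α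
    (rkBase L M κ)
    (fun _ ih => rkStep L M l κ ih)
    (fun o _ ih w => ∀ (β : Ordinal.{u}) (h : β < o), ih β h w)

/-- `Pr l α lam bound θ` is `Pr^l_α(lam; <bound, θ)`: every model with universe of
cardinality `lam` and vocabulary of cardinality `≤ θ` has `rk^l(M; <bound) ≥ α`,
where `rk^l(M; <bound) = sup { rk^l(w, M; <bound) + 1 : w ∈ [M]* }`. -/
def Pr (l : ℕ) (α : Ordinal.{u}) (lam bound θ : Cardinal.{u}) : Prop :=
  ∀ (L : FirstOrder.Language.{u, u}) (M : Type u) (S : L.Structure M),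
    Cardinal.mk M = lam → L.card ≤ θ →
    ∀ β < α, ∃ w : Set M, w.Finite ∧ w.Nonempty ∧ @rkGe L M S l bound β w

/-!
Whether one instance `(k, φ)` of the successor step can be met by witnesses of rank `≥ ε`
depends only on `(k, φ)` and `ε`. There are only `μ = |τ| + ℵ₀` such pairs and `μ⁺` is regular, so
the levels below `μ⁺` at which some pair stops splitting are bounded by some `σ < μ⁺`. If
`rk¹(w) ≥ μ⁺`, every instance for `w` has witnesses `v` of rank `≥ σ + ω`; were the rank of `v`
below `μ⁺`, it would first fail at a successor level `ε + 1 > σ + ω`, and `ε` would be the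
split level of a pair of `v`. Hence the witnesses have rank `≥ μ⁺` again, and induction on `α`
gives `rk¹(w) ≥ α` for all `α`.
-/

section Rank

variable {L : FirstOrder.Language.{u, u}} {M : Type u} [L.Structure M] {l : ℕ} {κ : Cardinal.{u}}

theorem rkGe_zero : rkGe L M l κ 0 = rkBase L M κ :=
  Ordinal.limitRecOn_zero _ _ _

theorem rkGe_succ (α : Ordinal.{u}) :
    rkGe L M l κ (Order.succ α) = rkStep L M l κ (rkGe L M l κ α) := by
  rw [Order.succ_eq_add_one]
  exact Ordinal.limitRecOn_add_one _ _ _ _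

theorem rkGe_limit {o : Ordinal.{u}} (ho : Order.IsSuccLimit o) {w : Set M} :
    rkGe L M l κ o w ↔ ∀ β < o, rkGe L M l κ β w := by
  unfold rkGe
  rw [Ordinal.limitRecOn_limit _ _ _ _ ho]

/-- `rkGe` need not be monotone in the level, which is why the least failing level is used. -/
theorem exists_rkGe_succ_failure {γ o : Ordinal.{u}} (hγ : Order.IsSuccLimit γ) {v : Set M}
    (hv : rkGe L M l κ γ v) (hvo : ¬ rkGe L M l κ o v) :
    ∃ ε, γ ≤ ε ∧ ε < o ∧ ¬ rkGe L M l κ (Order.succ ε) v ∧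
      ∀ ε' < ε, rkGe L M l κ (Order.succ ε') v := by
  obtain ⟨δ, hδ, hδmin⟩ := wellFounded_lt.has_min {β | ¬ rkGe L M l κ β v} ⟨o, hvo⟩
  have hbelow : ∀ β < δ, rkGe L M l κ β v := fun β hβ => by_contra fun h => hδmin β h hβ
  have hγδ : γ < δ := by
    by_contra! hδγ
    rcases hδγ.eq_or_lt with rfl | hlt
    · exact hδ hv
    · exact hδ ((rkGe_limit hγ).1 hv δ hlt)
  rcases Ordinal.zero_or_succ_or_isSuccLimit δ with rfl | ⟨ε, rfl⟩ | hδlim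
  · exact absurd hγδ not_lt_zero
  · exact ⟨ε, Order.lt_succ_iff.1 hγδ, (Order.lt_succ ε).trans_le (not_lt.1 (hδmin o hvo)),
      hδ, fun ε' hε' => hbelow _ (Order.succ_lt_succ hε')⟩
  · exact absurd ((rkGe_limit hδlim).2 hbelow) hδ

end Rank

section Splitting

variable {L : FirstOrder.Language.{u, u}} {M : Type u} [L.Structure M]

/-- The witnesses required by one instance of the successor step of `rk¹`; unlike the instance,
they depend only on `k` and `φ`, not on the enumeration `a` of `w`. -/
def Splits (P : Set M → Prop) {n : ℕ} (k : Fin n) (φ : L.Formula (Fin n)) : Prop :=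
  ∃ b : Fin 2 → Fin n → M,
    P (Set.range fun p : Fin 2 × Fin n => b p.1 p.2) ∧
    (∀ i : Fin 2, φ.Realize (b i)) ∧
    b 0 k ≠ b 1 k ∧
    ∀ m : Fin n, m ≠ k → b 0 m = b 1 m

theorem Splits.mono {P Q : Set M → Prop} (hPQ : ∀ v, P v → Q v) {n : ℕ} {k : Fin n}
    {φ : L.Formula (Fin n)} (h : Splits P k φ) : Splits Q k φ :=
  let ⟨b, hb, hφ, hk, hm⟩ := h
  ⟨b, hPQ _ hb, hφ, hk, hm⟩

theorem rkStep_iff {l : ℕ} (hl : l ≠ 0) {κ : Cardinal.{u}} {P : Set M → Prop} {w : Set M} :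
    rkStep L M l κ P w ↔ w.Finite ∧ w.Nonempty ∧
      ∀ (n : ℕ) (a : Fin n → M), Function.Injective a → Set.range a = w →
        ∀ (k : Fin n) (φ : L.Formula (Fin n)), φ.IsQF → φ.Realize a → Splits P k φ := by
  simp only [rkStep, Splits, hl, IsEmpty.forall_iff, and_true]

variable (M) in
noncomputable def splitLevel (l : ℕ) (κ : Cardinal.{u}) {n : ℕ} (k : Fin n)
    (φ : L.Formula (Fin n)) : Ordinal.{u} :=
  sInf {ε | ¬ Splits (rkGe L M l κ ε) k φ}

/-- The witness is the instance of the successor step at which the rank of `v` first fails. -/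
theorem exists_splitLevel_mem_Ico {l : ℕ} (hl : l ≠ 0) {κ : Cardinal.{u}} {γ o : Ordinal.{u}}
    (hγ : Order.IsSuccLimit γ) {v : Set M} (hfin : v.Finite) (hne : v.Nonempty)
    (hv : rkGe L M l κ γ v) (hvo : ¬ rkGe L M l κ o v) :
    ∃ (n : ℕ) (k : Fin n) (φ : L.Formula (Fin n)), splitLevel M l κ k φ ∈ Set.Ico γ o := by
  obtain ⟨ε, hγε, hεo, hfail, hbelow⟩ := exists_rkGe_succ_failure hγ hv hvo
  rw [rkGe_succ, rkStep_iff hl] at hfail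
  simp only [hfin, hne, true_and, not_forall] at hfail
  obtain ⟨n, a, ha, hav, k, φ, hqf, hφ, hnot⟩ := hfail
  have hsplit : ∀ ε' < ε, Splits (rkGe L M l κ ε') k φ := fun ε' hε' => by
    have := hbelow ε' hε'
    rw [rkGe_succ, rkStep_iff hl] at this
    exact this.2.2 n a ha hav k φ hqf hφ
  have hlevel : splitLevel M l κ k φ = ε :=
    le_antisymm (csInf_le' hnot)
      (le_csInf ⟨ε, hnot⟩ fun ε' hε' => not_lt.1 fun hlt => hε' (hsplit ε' hlt))
  exact ⟨n, k, φ, hlevel ▸ hγε, hlevel ▸ hεo⟩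

end Splitting

section Counting

variable (L : FirstOrder.Language.{u, u})

abbrev SplitDatum : Type u := Σ n : ℕ, Fin n × L.Formula (Fin n)

theorem card_formula_le (n : ℕ) : #(L.Formula (Fin n)) ≤ L.card + ℵ₀ := by
  refine (mk_le_of_injective (f := fun φ => (⟨0, φ⟩ : Σ m, L.BoundedFormula (Fin n) m))
    sigma_mk_injective).trans (Language.BoundedFormula.card_le.trans (max_le le_add_self ?_))
  simp only [mk_fin, lift_natCast, lift_uzero]
  rw [add_comm]
  exact add_le_add_right (natCast_lt_aleph0 (n := n)).le _

theorem card_splitDatum_le : #(SplitDatum L) ≤ L.card + ℵ₀ := by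
  have hμ : ℵ₀ ≤ L.card + ℵ₀ := le_add_self
  rw [mk_sigma]
  calc sum (fun n => #(Fin n × L.Formula (Fin n))) ≤ sum fun _ : ℕ => L.card + ℵ₀ :=
        sum_le_sum _ _ fun n => by
          simpa using
            mul_le_of_le hμ ((natCast_lt_aleph0 (n := n)).le.trans hμ) (card_formula_le L n)
    _ = L.card + ℵ₀ := by
        simp [aleph0_mul_eq hμ]

end Counting

section Main

variable {L : FirstOrder.Language.{u, u}} {M : Type u} [L.Structure M] {l : ℕ} {κ : Cardinal.{u}}

open scoped Ordinal

theorem splits_rkGe_ord_succ (hl : l ≠ 0) {w : Set M}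
    (h : rkGe L M l κ (Order.succ (L.card + ℵ₀)).ord w) {n : ℕ} (a : Fin n → M)
    (ha : Function.Injective a) (haw : Set.range a = w) (k : Fin n) (φ : L.Formula (Fin n))
    (hqf : φ.IsQF) (hφ : φ.Realize a) :
    Splits (rkGe L M l κ (Order.succ (L.card + ℵ₀)).ord) k φ := by
  set μ := L.card + ℵ₀
  set Λ := (Order.succ μ).ord
  have hμ : ℵ₀ ≤ μ := le_add_self
  have hΛ : Order.IsSuccLimit Λ := Cardinal.isSuccLimit_ord (hμ.trans (Order.le_succ μ))
  let level (d : {d : SplitDatum L // splitLevel M l κ d.2.1 d.2.2 < Λ}) :=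
    splitLevel M l κ d.1.2.1 d.1.2.2
  set σ := ⨆ d, level d
  have hσ : σ < Λ := by
    refine Ordinal.iSup_lt_of_lt_cof ?_ fun d => d.2
    rw [(Cardinal.isRegular_succ hμ).cof_ord]
    exact (Cardinal.mk_subtype_le _).trans_lt
      ((card_splitDatum_le L).trans_lt (Order.lt_succ μ))
  have hγ : Order.IsSuccLimit (σ + ω) := Ordinal.isSuccLimit_add σ Ordinal.isSuccLimit_omega0
  have hγΛ : σ + ω < Λ := Ordinal.isPrincipal_add_ord (hμ.trans (Order.le_succ μ)) hσ
    (Cardinal.omega0_lt_ord.2 (hμ.trans_lt (Order.lt_succ μ)))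
  by_contra hno
  have hw := (rkGe_limit hΛ).1 h _ (hΛ.succ_lt hγΛ)
  rw [rkGe_succ, rkStep_iff hl] at hw
  obtain ⟨b, hb, hbφ, hbk, hbm⟩ := hw.2.2 n a ha haw k φ hqf hφ
  obtain ⟨n', k', φ', hγle, hltΛ⟩ := exists_splitLevel_mem_Ico hl hγ (Set.finite_range _)
    ⟨b 0 k, (0, k), rfl⟩ hb fun hΛv => hno ⟨b, hΛv, hbφ, hbk, hbm⟩
  have hle : splitLevel M l κ k' φ' ≤ σ := Ordinal.le_iSup level ⟨⟨n', k', φ'⟩, hltΛ⟩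
  exact (hγle.trans hle).not_gt ((lt_add_iff_pos_right σ).2 Ordinal.omega0_pos)

theorem rkGe_of_rkGe_ord_succ (hl : l ≠ 0) {w : Set M}
    (h : rkGe L M l κ (Order.succ (L.card + ℵ₀)).ord w) (α : Ordinal.{u}) :
    rkGe L M l κ α w := by
  have hΛ : Order.IsSuccLimit (Order.succ (L.card + ℵ₀)).ord :=
    Cardinal.isSuccLimit_ord (le_add_self.trans (Order.le_succ _))
  induction α using WellFoundedLT.induction generalizing w with
  | _ α IH =>
    rcases Ordinal.zero_or_succ_or_isSuccLimit α with rfl | ⟨β, rfl⟩ | hα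
    · exact (rkGe_limit hΛ).1 h 0 hΛ.pos
    · have hbase := (rkGe_limit hΛ).1 h 0 hΛ.pos
      rw [rkGe_zero] at hbase
      rw [rkGe_succ, rkStep_iff hl]
      exact ⟨hbase.1, hbase.2.1, fun n a ha haw k φ hqf hφ =>
        (splits_rkGe_ord_succ hl h a ha haw k φ hqf hφ).mono
          fun v hv => IH β (Order.lt_succ β) hv⟩
    · exact (rkGe_limit hα).2 fun β hβ => IH β hβ h

end Main

theorem stmt_0 (L : FirstOrder.Language.{u, u}) (M : Type u) [L.Structure M]
    (κ : Cardinal.{u})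
    (w : Set M)
    (h : rkGe L M 1 κ (Order.succ (L.card + ℵ₀)).ord w) :
    ∀ α : Ordinal.{u}, rkGe L M 1 κ α w :=
  rkGe_of_rkGe_ord_succ one_ne_zero h

end Sh522
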